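/- (Harris-type geometric ergodicity used in Theorem 1.) Let S be a countable type and P : S → S → ℝ a stochastic matrix (P x y ≥ 0 for all x, y and Σ_y P x y = 1 for all x), acting on signed distributions by (μP)(y) = Σ_x μ(x)·P x y and on functions by (Pf)(x) = Σ_y P x y · f(y). Let U : S → ℝ satisfy U ≥ 1, and suppose: (drift) there exist γ ∈ (0,1) and K < ∞ with (PU)(x) ≤ γ·U(x) + K for all x ∈ S; (minorization) there exist R > 2K/(1−γ), α > 0, and a probability distribution ν on S such that P x y ≥ α·ν(y) for all y ∈ S and all x in the set C = { x ∈ S : U(x) ≤ R }. Define the U-weighted total variation norm ‖μ‖_U = Σ_x U(x)·|μ(x)| for signed distributions μ with this sum finite. Then P admits a unique invariant probability distribution π (i.e. πP = π) with ‖π‖_U < ∞, and there exist a constant c₁ > 0 and ρ ∈ (0,1) such that for all probability distributions μ₁, μ₂ with ‖μ₁‖_U, ‖μ₂‖_U < ∞ and all n ∈ ℕ, ‖μ₁Pⁿ − μ₂Pⁿ‖_U ≤ c₁·ρⁿ·‖μ₁ − μ₂‖_U. -/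

import Mathlib

open scoped ENNReal

/-- Left action of a transition matrix on (signed) distributions:
`(μP)(y) = Σ_x μ(x)·P x y`. -/
noncomputable def stepL {S : Type*} (P : S → S → ℝ) (μ : S → ℝ) : S → ℝ :=
  fun y => ∑' x, μ x * P x y

/-- `U`-weighted total variation norm `‖μ‖_U = Σ_x U(x)·|μ(x)|`, valued in `ℝ≥0∞`. -/
noncomputable def normU {S : Type*} (U : S → ℝ) (μ : S → ℝ) : ℝ≥0∞ :=
  ∑' x, ENNReal.ofReal (U x * |μ x|)

/-!
Take the weight `V = 1 + β U` with `β > 0` small. Drift and minorization give a two-point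
bound `‖P x - P z‖_V ≤ a (V x + V z)` with `a < 1`: when both points lie in `{U ≤ R}` the
rows of `P` overlap in mass at least `α`, and otherwise `U x + U z ≥ R`, which is large enough
for the drift to beat the constant `K` because `R > 2K/(1-γ)`. Writing `μ - ν = p - q` with
`p, q ≥ 0` of equal mass `m`, `m (μP - νP)` is the average of `P x - P z` over the product
coupling `p ⊗ q`, so the two-point bound makes `P` an `a`-contraction for `‖·‖_V` on
probability distributions. The iterates of a point mass are then Cauchy for `‖·‖_V`, their
limit is the invariant distribution, and `‖·‖_U` and `‖·‖_V` are equivalent norms.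
-/

open Filter Topology

section

variable {S : Type*}

lemma ENNReal.ofReal_mul_abs_tsum_le {ι : Type*} {c : ℝ} (hc : 0 ≤ c) (f : ι → ℝ) :
    ENNReal.ofReal (c * |∑' i, f i|) ≤ ∑' i, ENNReal.ofReal (c * |f i|) := by
  simp only [ENNReal.ofReal_mul hc, ENNReal.tsum_mul_left, ← Real.enorm_eq_ofReal_abs]
  gcongr
  exact enorm_tsum_le_tsum_enorm

lemma ENNReal.tsum_tsum_mul_mul_add {ι κ : Type*} (f A : ι → ℝ≥0∞)
    (g B : κ → ℝ≥0∞) :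
    ∑' i, ∑' j, f i * g j * (A i + B j)
      = (∑' i, f i * A i) * ∑' j, g j + (∑' i, f i) * ∑' j, g j * B j := by
  have hsplit : ∀ i j, f i * g j * (A i + B j) = f i * A i * g j + f i * (g j * B j) :=
    fun i j => by ring
  simp only [hsplit, ENNReal.tsum_add, ENNReal.tsum_mul_left, ENNReal.tsum_mul_right]

section WeightedNorm

variable {W : S → ℝ}

lemma normU_add_le (hW : ∀ x, 0 ≤ W x) (f g : S → ℝ) :
    normU W (f + g) ≤ normU W f + normU W g := by
  rw [normU, normU, normU, ← ENNReal.tsum_add]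
  refine ENNReal.tsum_le_tsum fun x => ?_
  rw [← ENNReal.ofReal_add (mul_nonneg (hW x) (abs_nonneg _)) (mul_nonneg (hW x) (abs_nonneg _)),
    ← mul_add]
  exact ENNReal.ofReal_le_ofReal (mul_le_mul_of_nonneg_left (abs_add_le _ _) (hW x))

@[simp] lemma normU_neg (f : S → ℝ) : normU W (-f) = normU W f := by
  simp only [normU, Pi.neg_apply, abs_neg]

lemma normU_sub_comm (f g : S → ℝ) : normU W (f - g) = normU W (g - f) := by
  simp only [normU, Pi.sub_apply, abs_sub_comm]

lemma normU_sub_le_add (hW : ∀ x, 0 ≤ W x) (f g h : S → ℝ) :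
    normU W (f - h) ≤ normU W (f - g) + normU W (g - h) := by
  simpa only [sub_add_sub_cancel] using normU_add_le hW (f - g) (g - h)

lemma normU_sub_le (hW : ∀ x, 0 ≤ W x) (f g : S → ℝ) :
    normU W (f - g) ≤ normU W f + normU W g := by
  simpa using normU_sub_le_add hW f 0 g

lemma normU_posPart_add_normU_negPart (hW : ∀ x, 0 ≤ W x) (μ : S → ℝ) :
    normU W μ⁺ + normU W μ⁻ = normU W μ := by
  rw [normU, normU, normU, ← ENNReal.tsum_add]
  refine tsum_congr fun x => ?_
  simp only [Pi.posPart_apply, Pi.negPart_apply, abs_of_nonneg (posPart_nonneg _),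
    abs_of_nonneg (negPart_nonneg _)]
  rw [← ENNReal.ofReal_add (mul_nonneg (hW x) (posPart_nonneg _))
    (mul_nonneg (hW x) (negPart_nonneg _)), ← mul_add, posPart_add_negPart]

lemma normU_le_of_le_mul {W' : S → ℝ} {c : ℝ} (hc : 0 ≤ c) (hW : ∀ x, W x ≤ c * W' x)
    (μ : S → ℝ) : normU W μ ≤ ENNReal.ofReal c * normU W' μ := by
  rw [normU, normU, ← ENNReal.tsum_mul_left]
  refine ENNReal.tsum_le_tsum fun x => ?_
  rw [← ENNReal.ofReal_mul hc, ← mul_assoc]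
  exact ENNReal.ofReal_le_ofReal (mul_le_mul_of_nonneg_right (hW x) (abs_nonneg _))

lemma normU_one_add_mul_le {U : S → ℝ} (hU : ∀ x, 1 ≤ U x) {β : ℝ} (hβ : 0 ≤ β)
    (μ : S → ℝ) : normU (fun x => 1 + β * U x) μ ≤ ENNReal.ofReal (1 + β) * normU U μ :=
  normU_le_of_le_mul (by positivity) (fun x => by nlinarith [hU x]) μ

lemma normU_le_normU_one_add_mul {U : S → ℝ} {β : ℝ} (hβ : 0 < β) (μ : S → ℝ) :
    normU U μ ≤ ENNReal.ofReal β⁻¹ * normU (fun x => 1 + β * U x) μ :=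
  normU_le_of_le_mul (by positivity)
    (fun x => by rw [inv_mul_eq_div, le_div_iff₀ hβ]; linarith) μ

lemma normU_one_add_mul_lt_top_iff {U : S → ℝ} (hU : ∀ x, 1 ≤ U x) {β : ℝ} (hβ : 0 < β)
    {μ : S → ℝ} : normU (fun x => 1 + β * U x) μ < ⊤ ↔ normU U μ < ⊤ :=
  ⟨fun h => (normU_le_normU_one_add_mul hβ μ).trans_lt
      (ENNReal.mul_lt_top ENNReal.ofReal_lt_top h),
    fun h => (normU_one_add_mul_le hU hβ.le μ).trans_lt
      (ENNReal.mul_lt_top ENNReal.ofReal_lt_top h)⟩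

lemma normU_eq_zero_iff (hW : ∀ x, 0 < W x) {μ : S → ℝ} : normU W μ = 0 ↔ μ = 0 := by
  simp [normU, ENNReal.tsum_eq_zero, funext_iff, (hW _).not_ge, (hW _).le]

lemma normU_lt_top_iff (hW : ∀ x, 0 ≤ W x) {μ : S → ℝ} :
    normU W μ < ⊤ ↔ Summable fun x => W x * |μ x| := by
  have hW0 : ∀ x, 0 ≤ W x * |μ x| := fun x => mul_nonneg (hW x) (abs_nonneg _)
  refine ⟨fun h => (ENNReal.summable_toReal h.ne).congr fun x => ENNReal.toReal_ofReal (hW0 x),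
    fun h => ?_⟩
  rw [normU, ← ENNReal.ofReal_tsum_of_nonneg hW0 h]
  exact ENNReal.ofReal_lt_top

lemma summable_of_normU_lt_top (hW : ∀ x, 1 ≤ W x) {μ : S → ℝ} (h : normU W μ < ⊤) :
    Summable μ := by
  have hsum := (normU_lt_top_iff fun x => zero_le_one.trans (hW x)).1 h
  exact summable_abs_iff.1 (hsum.of_nonneg_of_le (fun x => abs_nonneg _)
    fun x => le_mul_of_one_le_left (abs_nonneg _) (hW x))

lemma ofReal_abs_le_normU (hW : ∀ x, 1 ≤ W x) (μ : S → ℝ) (x : S) :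
    ENNReal.ofReal |μ x| ≤ normU W μ :=
  (ENNReal.ofReal_le_ofReal (le_mul_of_one_le_left (abs_nonneg _) (hW x))).trans
    (ENNReal.le_tsum x)

lemma ofReal_abs_tsum_le_normU (hW : ∀ x, 1 ≤ W x) (μ : S → ℝ) :
    ENNReal.ofReal |∑' x, μ x| ≤ normU W μ := by
  simpa [normU] using (ENNReal.ofReal_mul_abs_tsum_le zero_le_one μ).trans
    (ENNReal.tsum_le_tsum fun x => ENNReal.ofReal_le_ofReal
      (mul_le_mul_of_nonneg_right (by simpa using hW x) (abs_nonneg (μ x))))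

lemma isClosed_setOf_normU_le (E : ℝ≥0∞) : IsClosed {μ : S → ℝ | normU W μ ≤ E} :=
  (lowerSemicontinuous_tsum fun x => (ENNReal.continuous_ofReal.comp
    (continuous_const.mul (continuous_apply x).abs)).lowerSemicontinuous).isClosed_preimage E

lemma normU_sub_le_of_common_lower_bound {p q c : S → ℝ} (hW : ∀ y, 1 ≤ W y)
    (hc : ∀ y, 0 ≤ c y) (hcp : ∀ y, c y ≤ p y) (hcq : ∀ y, c y ≤ q y)
    (hp : Summable fun y => W y * p y) (hq : Summable fun y => W y * q y) (hcs : Summable c) :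
    normU W (p - q)
      ≤ ENNReal.ofReal (∑' y, W y * p y + ∑' y, W y * q y - 2 * ∑' y, c y) := by
  have hW0 : ∀ y, 0 ≤ W y := fun y => zero_le_one.trans (hW y)
  have hpt : ∀ y, W y * |p y - q y| ≤ W y * p y + W y * q y - 2 * c y := fun y => by
    have habs : |p y - q y| ≤ p y + q y - 2 * c y :=
      abs_le.2 ⟨by linarith [hcp y], by linarith [hcq y]⟩
    nlinarith [mul_le_mul_of_nonneg_left habs (hW0 y), mul_le_mul_of_nonneg_right (hW y) (hc y)]
  have hrhs : Summable fun y => W y * p y + W y * q y - 2 * c y :=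
    (hp.add hq).sub (hcs.mul_left 2)
  have hlhs : Summable fun y => W y * |p y - q y| :=
    hrhs.of_nonneg_of_le (fun y => mul_nonneg (hW0 y) (abs_nonneg _)) hpt
  simp only [normU, Pi.sub_apply]
  rw [← ENNReal.ofReal_tsum_of_nonneg (fun y => mul_nonneg (hW0 y) (abs_nonneg _)) hlhs,
    ← tsum_mul_left, ← hp.tsum_add hq, ← (hp.add hq).tsum_sub (hcs.mul_left 2)]
  exact ENNReal.ofReal_le_ofReal (hlhs.tsum_le_tsum hpt hrhs)

end WeightedNorm

structure IsProbDist (μ : S → ℝ) : Prop where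
  nonneg : ∀ x, 0 ≤ μ x
  hasSum : HasSum μ 1

def IsStochastic (P : S → S → ℝ) : Prop :=
  ∀ x, IsProbDist (P x)

namespace IsStochastic

variable {P : S → S → ℝ} {W : S → ℝ} {a : ℝ}

lemma le_one (hP : IsStochastic P) (x y : S) : P x y ≤ 1 :=
  le_hasSum (hP x).hasSum y fun z _ => (hP x).nonneg z

lemma summable_mul (hP : IsStochastic P) {μ : S → ℝ} (hμ : Summable μ) (y : S) :
    Summable fun x => μ x * P x y :=
  hμ.abs.of_norm_bounded fun x => by
    rw [Real.norm_eq_abs, abs_mul, abs_of_nonneg ((hP x).nonneg y)]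
    exact mul_le_of_le_one_right (abs_nonneg _) (hP.le_one x y)

lemma stepL_sub (hP : IsStochastic P) {μ ν : S → ℝ} (hμ : Summable μ) (hν : Summable ν) :
    stepL P (μ - ν) = stepL P μ - stepL P ν := by
  funext y
  simp only [stepL, Pi.sub_apply, sub_mul]
  exact (hP.summable_mul hμ y).tsum_sub (hP.summable_mul hν y)

lemma isProbDist_stepL (hP : IsStochastic P) {μ : S → ℝ} (hμ : IsProbDist μ) :
    IsProbDist (stepL P μ) := by
  have hF : Summable fun q : S × S => μ q.1 * P q.1 q.2 := by
    refine (summable_prod_of_nonneg fun q => mul_nonneg (hμ.nonneg _) ((hP _).nonneg _)).2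
      ⟨fun x => (hP x).hasSum.summable.mul_left (μ x), ?_⟩
    simpa only [tsum_mul_left, (hP _).hasSum.tsum_eq, mul_one] using hμ.hasSum.summable
  have htot : ∑' q : S × S, μ q.1 * P q.1 q.2 = 1 := by
    rw [hF.tsum_prod' fun x => (hP x).hasSum.summable.mul_left (μ x)]
    simpa only [tsum_mul_left, (hP _).hasSum.tsum_eq, mul_one] using hμ.hasSum.tsum_eq
  refine ⟨fun y => tsum_nonneg fun x => mul_nonneg (hμ.nonneg x) ((hP x).nonneg y), ?_⟩
  have hswap : HasSum (fun q : S × S => μ q.2 * P q.2 q.1) 1 :=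
    (Equiv.prodComm S S).hasSum_iff (f := fun q : S × S => μ q.1 * P q.1 q.2) |>.2
      (htot ▸ hF.hasSum)
  exact hswap.prod_fiberwise fun y => (hP.summable_mul hμ.hasSum.summable y).hasSum

lemma tsum_mul_stepL_sub (hP : IsStochastic P) {p q : S → ℝ} (hp : Summable p)
    (hq : Summable q) (y : S) :
    (∑' z, q z) * stepL P p y - (∑' x, p x) * stepL P q y
      = ∑' x, ∑' z, p x * q z * (P x y - P z y) := by
  have hinner : ∀ x, ∑' z, p x * q z * (P x y - P z y)
      = (∑' z, q z) * (p x * P x y) - p x * stepL P q y := fun x =>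
    calc ∑' z, p x * q z * (P x y - P z y)
        = ∑' z, (p x * P x y * q z - p x * (q z * P z y)) := tsum_congr fun z => by ring
      _ = p x * P x y * ∑' z, q z - p x * stepL P q y := by
        rw [(hq.mul_left _).tsum_sub ((hP.summable_mul hq y).mul_left _), tsum_mul_left,
          tsum_mul_left, stepL]
      _ = (∑' z, q z) * (p x * P x y) - p x * stepL P q y := by ring
  rw [tsum_congr hinner, ((hP.summable_mul hp y).mul_left _).tsum_sub (hp.mul_right _),
    tsum_mul_left, tsum_mul_right, stepL]

lemma ofReal_tsum_mul_normU_stepL_sub_le_tsum_tsum (hP : IsStochastic P) (hW : ∀ x, 0 ≤ W x)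
    {p q : S → ℝ} (hp0 : ∀ x, 0 ≤ p x) (hq0 : ∀ x, 0 ≤ q x) (hp : Summable p)
    (hq : Summable q) (hpq : ∑' x, p x = ∑' x, q x) :
    ENNReal.ofReal (∑' x, p x) * normU W (stepL P p - stepL P q)
      ≤ ∑' x, ∑' z, ENNReal.ofReal (p x) * ENNReal.ofReal (q z) * normU W (P x - P z) := by
  set m := ∑' x, p x
  have hm0 : 0 ≤ m := tsum_nonneg hp0
  have hcoupling : ∀ y, m * (stepL P p y - stepL P q y)
      = ∑' x, ∑' z, p x * q z * (P x y - P z y) := fun y => by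
    rw [← hP.tsum_mul_stepL_sub hp hq y, ← hpq]; ring
  calc ENNReal.ofReal m * normU W (stepL P p - stepL P q)
      = ∑' y, ENNReal.ofReal (W y * |∑' x, ∑' z, p x * q z * (P x y - P z y)|) := by
        rw [normU, ← ENNReal.tsum_mul_left]
        refine tsum_congr fun y => ?_
        rw [← ENNReal.ofReal_mul hm0, ← hcoupling, abs_mul, abs_of_nonneg hm0, Pi.sub_apply]
        ring_nf
    _ ≤ ∑' y, ∑' x, ∑' z, ENNReal.ofReal (W y * |p x * q z * (P x y - P z y)|) :=
        ENNReal.tsum_le_tsum fun y => (ENNReal.ofReal_mul_abs_tsum_le (hW y) _).trans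
          (ENNReal.tsum_le_tsum fun x => ENNReal.ofReal_mul_abs_tsum_le (hW y) _)
    _ = ∑' x, ∑' z, ENNReal.ofReal (p x) * ENNReal.ofReal (q z) * normU W (P x - P z) := by
        rw [ENNReal.tsum_comm]
        refine tsum_congr fun x => ?_
        rw [ENNReal.tsum_comm]
        refine tsum_congr fun z => ?_
        rw [normU, ← ENNReal.tsum_mul_left]
        refine tsum_congr fun y => ?_
        rw [← ENNReal.ofReal_mul (hp0 x), ← ENNReal.ofReal_mul (mul_nonneg (hp0 x) (hq0 z)),
          abs_mul, abs_of_nonneg (mul_nonneg (hp0 x) (hq0 z)), Pi.sub_apply]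
        ring_nf

lemma ofReal_tsum_mul_normU_stepL_sub_le (hP : IsStochastic P) (hW : ∀ x, 0 ≤ W x)
    (htwo : ∀ x z, normU W (P x - P z) ≤ ENNReal.ofReal (a * (W x + W z)))
    {p q : S → ℝ} (hp0 : ∀ x, 0 ≤ p x) (hq0 : ∀ x, 0 ≤ q x) (hp : Summable p)
    (hq : Summable q) (hpq : ∑' x, p x = ∑' x, q x) :
    ENNReal.ofReal (∑' x, p x) * normU W (stepL P p - stepL P q)
      ≤ ENNReal.ofReal (∑' x, p x) * (ENNReal.ofReal a * (normU W p + normU W q)) := by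
  have hnorm : ∀ {μ : S → ℝ}, (∀ x, 0 ≤ μ x) →
      normU W μ = ∑' x, ENNReal.ofReal (μ x) * ENNReal.ofReal (W x) := fun hμ =>
    tsum_congr fun x => by rw [abs_of_nonneg (hμ x), mul_comm, ENNReal.ofReal_mul (hμ x)]
  refine (hP.ofReal_tsum_mul_normU_stepL_sub_le_tsum_tsum hW hp0 hq0 hp hq hpq).trans ?_
  calc ∑' x, ∑' z, ENNReal.ofReal (p x) * ENNReal.ofReal (q z) * normU W (P x - P z)
      ≤ ∑' x, ∑' z, ENNReal.ofReal a * (ENNReal.ofReal (p x) * ENNReal.ofReal (q z)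
          * (ENNReal.ofReal (W x) + ENNReal.ofReal (W z))) := by
        refine ENNReal.tsum_le_tsum fun x => ENNReal.tsum_le_tsum fun z => ?_
        refine (mul_le_mul_right (htwo x z) _).trans_eq ?_
        rw [ENNReal.ofReal_mul' (add_nonneg (hW x) (hW z)), ENNReal.ofReal_add (hW x) (hW z)]
        ring
    _ = ENNReal.ofReal (∑' x, p x) * (ENNReal.ofReal a * (normU W p + normU W q)) := by
        have hmp := ENNReal.ofReal_tsum_of_nonneg hp0 hp
        have hmq := ENNReal.ofReal_tsum_of_nonneg hq0 hq
        rw [← hpq] at hmq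
        simp only [ENNReal.tsum_mul_left, ENNReal.tsum_tsum_mul_mul_add, hnorm hp0, hnorm hq0,
          ← hmp, ← hmq]
        ring

theorem normU_stepL_sub_le (hP : IsStochastic P) (hW : ∀ x, 0 ≤ W x)
    (htwo : ∀ x z, normU W (P x - P z) ≤ ENNReal.ofReal (a * (W x + W z)))
    {μ ν : S → ℝ} (hμ : IsProbDist μ) (hν : IsProbDist ν) :
    normU W (stepL P μ - stepL P ν) ≤ ENNReal.ofReal a * normU W (μ - ν) := by
  set p := (μ - ν)⁺
  set q := (μ - ν)⁻
  have hp0 : ∀ x, 0 ≤ p x := fun x => posPart_nonneg _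
  have hq0 : ∀ x, 0 ≤ q x := fun x => negPart_nonneg _
  have hpq : p - q = μ - ν := posPart_sub_negPart _
  have hsummable : Summable (μ - ν) := hμ.hasSum.summable.sub hν.hasSum.summable
  have hp : Summable p := hsummable.abs.of_nonneg_of_le hp0 fun x =>
    (le_add_of_nonneg_right (hq0 x)).trans_eq (posPart_add_negPart _)
  have hq : Summable q := hsummable.abs.of_nonneg_of_le hq0 fun x =>
    (le_add_of_nonneg_left (hp0 x)).trans_eq (posPart_add_negPart _)
  have hmass : ∑' x, p x = ∑' x, q x := by
    rw [← sub_eq_zero, ← hp.tsum_sub hq]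
    have h : HasSum (p - q) (1 - 1) := hpq ▸ hμ.hasSum.sub hν.hasSum
    exact h.tsum_eq.trans (sub_self 1)
  have hstep : stepL P p - stepL P q = stepL P μ - stepL P ν := by
    rw [← hP.stepL_sub hp hq, hpq, hP.stepL_sub hμ.hasSum.summable hν.hasSum.summable]
  rcases (tsum_nonneg hp0).eq_or_lt with hm | hm
  · have hp_zero : p = 0 := (hasSum_zero_iff_of_nonneg hp0).1 (hm ▸ hp.hasSum)
    have hq_zero : q = 0 :=
      (hasSum_zero_iff_of_nonneg hq0).1 (by rw [hm, hmass]; exact hq.hasSum)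
    rw [← hstep, hp_zero, hq_zero, sub_self]
    simp [normU]
  · have key := hP.ofReal_tsum_mul_normU_stepL_sub_le hW htwo hp0 hq0 hp hq hmass
    rw [hstep, normU_posPart_add_normU_negPart hW] at key
    exact (ENNReal.mul_le_mul_iff_right (ENNReal.ofReal_pos.2 hm).ne' ENNReal.ofReal_ne_top).1 key

end IsStochastic

def LipschitzOnProbDist (W : S → ℝ) (r : ℝ≥0∞) (T : (S → ℝ) → S → ℝ) : Prop :=
  ∀ μ ν, IsProbDist μ → IsProbDist ν → normU W (T μ - T ν) ≤ r * normU W (μ - ν)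

section Contracting

variable {W : S → ℝ} {T : (S → ℝ) → S → ℝ} {r : ℝ≥0∞}

lemma isProbDist_iterate (hT : ∀ μ, IsProbDist μ → IsProbDist (T μ)) {μ : S → ℝ}
    (hμ : IsProbDist μ) (n : ℕ) : IsProbDist (T^[n] μ) := by
  induction n with
  | zero => exact hμ
  | succ n ih => exact Function.iterate_succ_apply' T n μ ▸ hT _ ih

lemma normU_iterate_sub_le (hT : ∀ μ, IsProbDist μ → IsProbDist (T μ))
    (hcontr : LipschitzOnProbDist W r T)
    {μ ν : S → ℝ} (hμ : IsProbDist μ) (hν : IsProbDist ν) (n : ℕ) :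
    normU W (T^[n] μ - T^[n] ν) ≤ r ^ n * normU W (μ - ν) := by
  induction n with
  | zero => simp
  | succ n ih =>
    rw [Function.iterate_succ_apply', Function.iterate_succ_apply', pow_succ', mul_assoc]
    exact (hcontr _ _ (isProbDist_iterate hT hμ n) (isProbDist_iterate hT hν n)).trans
      (mul_le_mul_right ih r)

lemma exists_normU_sub_le_tsum (hW : ∀ x, 1 ≤ W x) {μ : ℕ → S → ℝ}
    (hd : ∑' n, normU W (μ (n + 1) - μ n) ≠ ⊤) :
    ∃ π, ∀ n, normU W (π - μ n) ≤ ∑' k, normU W (μ (k + n + 1) - μ (k + n)) := by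
  have hW0 : ∀ x, 0 ≤ W x := fun x => zero_le_one.trans (hW x)
  have hcauchy : ∀ x, CauchySeq fun n => μ n x := fun x =>
    cauchySeq_of_edist_le_of_tsum_ne_top _ (fun n => by
      rw [edist_dist, Real.dist_eq, abs_sub_comm]
      exact ofReal_abs_le_normU hW (μ (n + 1) - μ n) x) hd
  choose π hπ using fun x => cauchySeq_tendsto_of_complete (hcauchy x)
  refine ⟨π, fun n => ?_⟩
  have htail : ∀ k, normU W (μ (k + n) - μ n)
      ≤ ∑ j ∈ Finset.range k, normU W (μ (j + n + 1) - μ (j + n)) := by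
    intro k
    induction k with
    | zero => simp [normU]
    | succ k ih =>
      rw [Finset.sum_range_succ, add_comm (∑ j ∈ _, _), Nat.add_right_comm]
      exact (normU_sub_le_add hW0 _ (μ (k + n)) _).trans (add_le_add le_rfl ih)
  -- Fatou: the closed sublevel sets of `normU W` pass the tail bound to the pointwise limit.
  refine (isClosed_setOf_normU_le _).mem_of_tendsto (tendsto_pi_nhds.2 fun x =>
    ((hπ x).comp (tendsto_add_atTop_nat n)).sub_const (μ n x)) (Eventually.of_forall fun k => ?_)
  exact (htail k).trans (ENNReal.sum_le_tsum _)

lemma IsProbDist.of_tendsto_normU (hW : ∀ x, 1 ≤ W x) {μ : ℕ → S → ℝ}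
    (hμ : ∀ n, IsProbDist (μ n)) {π : S → ℝ}
    (h : Tendsto (fun n => normU W (π - μ n)) atTop (𝓝 0)) : IsProbDist π := by
  have hpt : ∀ x, Tendsto (fun n => μ n x) atTop (𝓝 (π x)) := fun x =>
    tendsto_iff_edist_tendsto_0.2 <| tendsto_of_tendsto_of_tendsto_of_le_of_le tendsto_const_nhds h
      (fun _ => zero_le) fun n => by
        rw [edist_dist, Real.dist_eq, abs_sub_comm]
        exact ofReal_abs_le_normU hW (π - μ n) x
  obtain ⟨n, hn⟩ := (h.eventually (gt_mem_nhds ENNReal.zero_lt_top)).exists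
  have hπ : Summable π := by
    simpa using (summable_of_normU_lt_top hW hn).add (hμ n).hasSum.summable
  have hmass : ∀ n, ENNReal.ofReal |∑' x, π x - 1| ≤ normU W (π - μ n) := fun n => by
    rw [← (hμ n).hasSum.tsum_eq, ← hπ.tsum_sub (hμ n).hasSum.summable]
    exact ofReal_abs_tsum_le_normU hW (π - μ n)
  have hmass' := ge_of_tendsto' h hmass
  refine ⟨fun x => ge_of_tendsto' (hpt x) fun n => (hμ n).nonneg x, ?_⟩
  rw [nonpos_iff_eq_zero, ENNReal.ofReal_eq_zero, abs_nonpos_iff, sub_eq_zero] at hmass'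
  exact hmass' ▸ hπ.hasSum

lemma isFixedPt_of_tendsto_normU (hW : ∀ x, 0 < W x) (hr : r < 1)
    (hcontr : LipschitzOnProbDist W r T)
    {μ : ℕ → S → ℝ} (hμ : ∀ n, IsProbDist (μ n)) (hμT : ∀ n, μ (n + 1) = T (μ n))
    {π : S → ℝ} (hπ : IsProbDist π)
    (hlim : Tendsto (fun n => normU W (π - μ n)) atTop (𝓝 0)) :
    Function.IsFixedPt T π := by
  have hbound (n : ℕ) :
      normU W (T π - π) ≤ r * normU W (π - μ n) + normU W (π - μ (n + 1)) := by
    refine (normU_sub_le_add (fun x => (hW x).le) _ (T (μ n)) _).trans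
      (add_le_add (hcontr _ _ hπ (hμ n)) ?_)
    rw [normU_sub_comm, hμT]
  have hlim' : Tendsto (fun n => r * normU W (π - μ n) + normU W (π - μ (n + 1))) atTop
      (𝓝 0) := by
    simpa using (ENNReal.Tendsto.const_mul hlim (Or.inr (hr.trans ENNReal.one_lt_top).ne)).add
      (hlim.comp (tendsto_add_atTop_nat 1))
  have hzero := ge_of_tendsto' hlim' hbound
  rwa [nonpos_iff_eq_zero, normU_eq_zero_iff hW, sub_eq_zero] at hzero

theorem exists_fixedPoint_of_contracting (hW : ∀ x, 1 ≤ W x) (hr : r < 1)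
    (hT : ∀ μ, IsProbDist μ → IsProbDist (T μ))
    (hcontr : LipschitzOnProbDist W r T)
    {μ₀ : S → ℝ} (hμ₀ : IsProbDist μ₀) (hμ₀W : normU W μ₀ < ⊤)
    (hTμ₀ : normU W (T μ₀ - μ₀) < ⊤) :
    ∃ π, IsProbDist π ∧ normU W π < ⊤ ∧ T π = π := by
  have hW0 : ∀ x, 0 ≤ W x := fun x => zero_le_one.trans (hW x)
  set μ : ℕ → S → ℝ := fun n => T^[n] μ₀
  have hμ : ∀ n, IsProbDist (μ n) := isProbDist_iterate hT hμ₀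
  have hstep (n : ℕ) : normU W (μ (n + 1) - μ n) ≤ r ^ n * normU W (T μ₀ - μ₀) := by
    simpa only [μ, Function.iterate_succ_apply] using
      normU_iterate_sub_le hT hcontr (hT μ₀ hμ₀) hμ₀ n
  have hd : ∑' n, normU W (μ (n + 1) - μ n) ≠ ⊤ := by
    refine ne_top_of_le_ne_top ?_ (ENNReal.tsum_le_tsum hstep)
    rw [ENNReal.tsum_mul_right, ENNReal.tsum_geometric]
    exact ENNReal.mul_ne_top (ENNReal.inv_ne_top.2 (tsub_pos_of_lt hr).ne') hTμ₀.ne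
  obtain ⟨π, hπ⟩ := exists_normU_sub_le_tsum hW hd
  have hlim : Tendsto (fun n => normU W (π - μ n)) atTop (𝓝 0) :=
    tendsto_of_tendsto_of_tendsto_of_le_of_le tendsto_const_nhds
      (ENNReal.tendsto_sum_nat_add _ hd) (fun _ => zero_le) hπ
  have hπP : IsProbDist π := .of_tendsto_normU hW hμ hlim
  refine ⟨π, hπP, ?_, ?_⟩
  · calc normU W π ≤ normU W (π - μ 0) + normU W (μ 0 - 0) := by
          simpa using normU_sub_le_add hW0 π (μ 0) 0
      _ < ⊤ := ENNReal.add_lt_top.2 ⟨(hπ 0).trans_lt (lt_top_iff_ne_top.2 (by simpa using hd)),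
          by simpa [μ] using hμ₀W⟩
  · exact isFixedPt_of_tendsto_normU (fun x => zero_lt_one.trans_le (hW x)) hr hcontr hμ
      (fun n => Function.iterate_succ_apply' T n μ₀) hπP hlim

theorem fixedPoint_unique_of_contracting (hW : ∀ x, 0 < W x) (hr : r < 1)
    (hcontr : LipschitzOnProbDist W r T)
    {π π' : S → ℝ} (hπ : IsProbDist π) (hπ' : IsProbDist π') (hπW : normU W π < ⊤)
    (hπ'W : normU W π' < ⊤) (hfix : T π = π) (hfix' : T π' = π') : π = π' := by
  have hfin : normU W (π - π') ≠ ⊤ := ne_top_of_le_ne_top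
    (ENNReal.add_lt_top.2 ⟨hπW, hπ'W⟩).ne (normU_sub_le (fun x => (hW x).le) π π')
  have hle : normU W (π - π') ≤ r * normU W (π - π') := by
    simpa only [hfix, hfix'] using hcontr π π' hπ hπ'
  have hzero : normU W (π - π') = 0 := by
    by_contra h
    exact hr.not_ge ((ENNReal.mul_le_mul_iff_left h hfin).1 (by rwa [one_mul]))
  rwa [normU_eq_zero_iff hW, sub_eq_zero] at hzero

end Contracting

namespace IsStochastic

variable {P : S → S → ℝ} {W : S → ℝ} {a : ℝ}

theorem normU_iterate_stepL_sub_le (hP : IsStochastic P) (hW : ∀ x, 0 ≤ W x)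
    (htwo : ∀ x z, normU W (P x - P z) ≤ ENNReal.ofReal (a * (W x + W z)))
    {μ ν : S → ℝ} (hμ : IsProbDist μ) (hν : IsProbDist ν) (n : ℕ) :
    normU W ((stepL P)^[n] μ - (stepL P)^[n] ν) ≤ ENNReal.ofReal a ^ n * normU W (μ - ν) :=
  normU_iterate_sub_le (fun _ => hP.isProbDist_stepL)
    (fun _ _ => hP.normU_stepL_sub_le hW htwo) hμ hν n

theorem existsUnique_invariant (hP : IsStochastic P) (hW : ∀ x, 1 ≤ W x) (ha : a < 1)
    (htwo : ∀ x z, normU W (P x - P z) ≤ ENNReal.ofReal (a * (W x + W z)))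
    {x₀ : S} (hx₀ : normU W (P x₀) < ⊤) :
    ∃! π, IsProbDist π ∧ normU W π < ⊤ ∧ stepL P π = π := by
  classical
  have hW0 : ∀ x, 0 ≤ W x := fun x => zero_le_one.trans (hW x)
  have hr : ENNReal.ofReal a < 1 := ENNReal.ofReal_lt_one.2 ha
  have hcontr : LipschitzOnProbDist W (ENNReal.ofReal a) (stepL P) := fun _ _ =>
    hP.normU_stepL_sub_le hW0 htwo
  set δ : S → ℝ := Pi.single x₀ 1
  have hδ : IsProbDist δ :=
    ⟨(Pi.single_nonneg.2 zero_le_one : (0 : S → ℝ) ≤ δ), hasSum_pi_single x₀ 1⟩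
  have hδW : normU W δ < ⊤ := by
    rw [normU, tsum_eq_single x₀ fun x hx => by simp [δ, hx]]
    exact ENNReal.ofReal_lt_top
  have hPδ : stepL P δ = P x₀ := funext fun y => by
    rw [stepL, tsum_eq_single x₀ fun x hx => by simp [δ, hx]]
    simp [δ]
  obtain ⟨π, hπ, hπW, hfix⟩ := exists_fixedPoint_of_contracting hW hr
    (fun _ => hP.isProbDist_stepL) hcontr hδ hδW
    (hPδ ▸ (normU_sub_le hW0 _ _).trans_lt (ENNReal.add_lt_top.2 ⟨hx₀, hδW⟩))
  exact ⟨π, ⟨hπ, hπW, hfix⟩, fun π' ⟨hπ', hπ'W, hfix'⟩ =>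
    fixedPoint_unique_of_contracting (fun x => zero_lt_one.trans_le (hW x)) hr hcontr hπ' hπ
      hπ'W hπW hfix' hfix⟩

end IsStochastic

lemma one_sub_le_of_drift [Nonempty S] {P : S → S → ℝ} (hP : IsStochastic P) {U : S → ℝ}
    (hU : ∀ x, 1 ≤ U x) {γ K : ℝ} (hγ0 : 0 ≤ γ) (hγ1 : γ ≤ 1)
    (hPUsum : ∀ x, Summable fun y => P x y * U y)
    (hdrift : ∀ x, ∑' y, P x y * U y ≤ γ * U x + K) : 1 - γ ≤ K := by
  have hbdd : BddBelow (Set.range U) := ⟨1, Set.forall_mem_range.2 hU⟩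
  set u := ⨅ x, U x
  have hu : 1 ≤ u := le_ciInf hU
  have hPU : ∀ x, u ≤ ∑' y, P x y * U y := fun x =>
    calc u = ∑' y, P x y * u := by rw [tsum_mul_right, (hP x).hasSum.tsum_eq, one_mul]
      _ ≤ ∑' y, P x y * U y :=
        ((hP x).hasSum.summable.mul_right u).tsum_le_tsum
          (fun y => mul_le_mul_of_nonneg_left (ciInf_le hbdd y) ((hP x).nonneg y)) (hPUsum x)
  have hu_drift : u - K ≤ γ * u := by
    rw [Real.mul_iInf_of_nonneg hγ0]
    exact le_ciInf fun x => by linarith [hPU x, hdrift x]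
  nlinarith

-- `s` stands for `U x + U z`, so that `2 + β s = V x + V z` for `V = 1 + β U`.
lemma exists_harris_constants {γ K R α : ℝ} (hγ0 : 0 ≤ γ) (hγ1 : γ < 1) (hK : 0 < K)
    (hR : R > 2 * K / (1 - γ)) (hα : 0 < α) :
    ∃ β > 0, ∃ a ∈ Set.Ioo (0 : ℝ) 1,
      (∀ s, 0 ≤ s → s ≤ 2 * R →
        2 + β * (γ * s + 2 * K) - 2 * α ≤ a * (2 + β * s)) ∧
      ∀ s, R ≤ s → 2 + β * (γ * s + 2 * K) ≤ a * (2 + β * s) := by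
  have hR0 : 0 < R := (div_pos (by positivity) (by linarith)).trans hR
  have hRK : 2 * K < (1 - γ) * R := by
    have := (div_lt_iff₀ (by linarith : (0 : ℝ) < 1 - γ)).1 hR
    linarith
  set β := α / (2 * γ * R + 2 * K)
  have hβ : 0 < β := by positivity
  have hβα : β * (2 * γ * R + 2 * K) = α := div_mul_cancel₀ _ (by positivity)
  set b := (2 + β * (γ * R + 2 * K)) / (2 + β * R)
  have hb : b * (2 + β * R) = 2 + β * (γ * R + 2 * K) := div_mul_cancel₀ _ (by positivity)
  have hb1 : b < 1 := (div_lt_one (by positivity)).2 (by nlinarith)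
  have hγb : γ ≤ b := (le_div_iff₀ (by positivity)).2 (by nlinarith)
  refine ⟨β, hβ, max (1 - α / 2) b,
    ⟨lt_max_of_lt_right (by positivity), max_lt (by linarith) hb1⟩,
    fun s hs0 hsR => ?_, fun s hsR => ?_⟩
  · have hdrift : β * (γ * s + 2 * K) ≤ α :=
      hβα ▸ mul_le_mul_of_nonneg_left (by nlinarith) hβ.le
    nlinarith [le_max_left (1 - α / 2) b, le_max_right (1 - α / 2) b, mul_nonneg hβ.le hs0]
  · have ha : b ≤ max (1 - α / 2) b := le_max_right _ _
    nlinarith [mul_le_mul_of_nonneg_right ha (by positivity : (0 : ℝ) ≤ 2 + β * R),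
      mul_le_mul_of_nonneg_right (hγb.trans ha) (mul_nonneg hβ.le (sub_nonneg.2 hsR))]

theorem exists_two_point_bound {P : S → S → ℝ} (hP : IsStochastic P) {U : S → ℝ}
    (hU : ∀ x, 1 ≤ U x) {γ K : ℝ} (hγ0 : 0 ≤ γ) (hγ1 : γ < 1) (hK : 0 < K)
    (hPUsum : ∀ x, Summable fun y => P x y * U y)
    (hdrift : ∀ x, ∑' y, P x y * U y ≤ γ * U x + K)
    {R : ℝ} (hR : R > 2 * K / (1 - γ)) {α : ℝ} (hα : 0 < α)
    {ν : S → ℝ} (hν : IsProbDist ν)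
    (hminor : ∀ x, U x ≤ R → ∀ y, α * ν y ≤ P x y) :
    ∃ β > 0, ∃ a ∈ Set.Ioo (0 : ℝ) 1, ∀ x z,
      normU (fun y => 1 + β * U y) (P x - P z)
        ≤ ENNReal.ofReal (a * ((1 + β * U x) + (1 + β * U z))) := by
  obtain ⟨β, hβ, a, ha, hsmall, hlarge⟩ := exists_harris_constants hγ0 hγ1 hK hR hα
  refine ⟨β, hβ, a, ha, fun x z => ?_⟩
  have hV : ∀ y, 1 ≤ 1 + β * U y := fun y =>
    le_add_of_nonneg_right (mul_nonneg hβ.le (zero_le_one.trans (hU y)))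
  have hVP : ∀ w, Summable (fun y => (1 + β * U y) * P w y) ∧
      ∑' y, (1 + β * U y) * P w y ≤ 1 + β * (γ * U w + K) := fun w => by
    have hsplit : (fun y => (1 + β * U y) * P w y) = fun y => P w y + β * (P w y * U y) :=
      funext fun y => by ring
    have hsum := (hP w).hasSum.summable.add ((hPUsum w).mul_left β)
    refine ⟨hsplit ▸ hsum, ?_⟩
    rw [hsplit, (hP w).hasSum.summable.tsum_add ((hPUsum w).mul_left β), tsum_mul_left,
      (hP w).hasSum.tsum_eq]
    gcongr
    exact hdrift w
  have hs0 : 0 ≤ U x + U z := by linarith [hU x, hU z]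
  by_cases hC : U x ≤ R ∧ U z ≤ R
  · refine (normU_sub_le_of_common_lower_bound hV (c := fun y => α * ν y)
      (fun y => mul_nonneg hα.le (hν.nonneg y)) (hminor x hC.1) (hminor z hC.2)
      (hVP x).1 (hVP z).1
      (hν.hasSum.summable.mul_left α)).trans (ENNReal.ofReal_le_ofReal ?_)
    rw [tsum_mul_left, hν.hasSum.tsum_eq]
    nlinarith [hsmall (U x + U z) hs0 (by linarith), (hVP x).2, (hVP z).2]
  · have hsR : R ≤ U x + U z := by
      rcases not_and_or.1 hC with h | h <;> linarith [hU x, hU z]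
    refine (normU_sub_le_of_common_lower_bound hV (c := fun _ => 0) (fun _ => le_rfl)
      (fun y => (hP x).nonneg y) (fun y => (hP z).nonneg y) (hVP x).1 (hVP z).1
      summable_zero).trans (ENNReal.ofReal_le_ofReal ?_)
    rw [tsum_zero, mul_zero, sub_zero]
    nlinarith [hlarge (U x + U z) hsR, (hVP x).2, (hVP z).2]

end

theorem harris_geometric_ergodicity_general {S : Type*}
    (P : S → S → ℝ) (hP0 : ∀ x y, 0 ≤ P x y) (hP1 : ∀ x, HasSum (P x) 1)
    (U : S → ℝ) (hU : ∀ x, 1 ≤ U x)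
    (γ K : ℝ) (hγ : γ ∈ Set.Ioo (0 : ℝ) 1)
    (hPUsum : ∀ x, Summable fun y => P x y * U y)
    (hdrift : ∀ x, (∑' y, P x y * U y) ≤ γ * U x + K)
    (R : ℝ) (hR : R > 2 * K / (1 - γ))
    (α : ℝ) (hα : 0 < α)
    (ν : S → ℝ) (hν0 : ∀ y, 0 ≤ ν y) (hν1 : HasSum ν 1)
    (hminor : ∀ x, U x ≤ R → ∀ y, α * ν y ≤ P x y) :
    (∃! π : S → ℝ,
        (∀ x, 0 ≤ π x) ∧ HasSum π 1 ∧ normU U π < ⊤ ∧ stepL P π = π) ∧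
    ∃ c₁ > (0 : ℝ), ∃ ρ ∈ Set.Ioo (0 : ℝ) 1,
      ∀ μ₁ μ₂ : S → ℝ,
        (∀ x, 0 ≤ μ₁ x) → HasSum μ₁ 1 → normU U μ₁ < ⊤ →
        (∀ x, 0 ≤ μ₂ x) → HasSum μ₂ 1 → normU U μ₂ < ⊤ →
        ∀ n : ℕ,
          normU U ((stepL P)^[n] μ₁ - (stepL P)^[n] μ₂)
            ≤ ENNReal.ofReal (c₁ * ρ ^ n) * normU U (μ₁ - μ₂) := by
  have hP : IsStochastic P := fun x => ⟨hP0 x, hP1 x⟩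
  have hS : Nonempty S := not_isEmpty_iff.1 fun _ => one_ne_zero (hν1.unique hasSum_empty)
  have hK : 0 < K := by linarith [one_sub_le_of_drift hP hU hγ.1.le hγ.2.le hPUsum hdrift, hγ.2]
  obtain ⟨x₀⟩ := hS
  obtain ⟨β, hβ, a, ha, htwo⟩ :=
    exists_two_point_bound hP hU hγ.1.le hγ.2 hK hPUsum hdrift hR hα ⟨hν0, hν1⟩ hminor
  have hV : ∀ x, 1 ≤ 1 + β * U x := fun x => le_add_of_nonneg_right (by nlinarith [hU x])
  have hfin := fun μ => normU_one_add_mul_lt_top_iff hU hβ (μ := μ)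
  have hPx₀ : normU U (P x₀) < ⊤ :=
    (normU_lt_top_iff fun x => zero_le_one.trans (hU x)).2
      (by simpa [abs_of_nonneg (hP0 x₀ _), mul_comm] using hPUsum x₀)
  refine ⟨?_, (1 + β) / β, by positivity, a, ha,
    fun μ₁ μ₂ h₁0 h₁1 _ h₂0 h₂1 _ n => ?_⟩
  · obtain ⟨π, ⟨hπ, hπV, hfix⟩, huniq⟩ :=
      hP.existsUnique_invariant hV ha.2 htwo ((hfin _).2 hPx₀)
    exact ⟨π, ⟨hπ.nonneg, hπ.hasSum, (hfin π).1 hπV, hfix⟩,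
      fun π' ⟨h0, h1, hπ'U, hfix'⟩ =>
        huniq π' ⟨⟨h0, h1⟩, (hfin π').2 hπ'U, hfix'⟩⟩
  · have hiter := hP.normU_iterate_stepL_sub_le (fun x => zero_le_one.trans (hV x)) htwo
      ⟨h₁0, h₁1⟩ ⟨h₂0, h₂1⟩ n
    calc normU U ((stepL P)^[n] μ₁ - (stepL P)^[n] μ₂)
        ≤ ENNReal.ofReal β⁻¹ *
            (ENNReal.ofReal a ^ n * (ENNReal.ofReal (1 + β) * normU U (μ₁ - μ₂))) := by
          grw [normU_le_normU_one_add_mul hβ, hiter, normU_one_add_mul_le hU hβ.le]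
      _ = ENNReal.ofReal ((1 + β) / β * a ^ n) * normU U (μ₁ - μ₂) := by
          rw [ENNReal.ofReal_mul (by positivity), ENNReal.ofReal_div_of_pos hβ,
            ENNReal.ofReal_pow ha.1.le, ENNReal.ofReal_inv_of_pos hβ, ENNReal.div_eq_inv_mul]
          ring

/-- Harris-type geometric ergodicity: under the drift condition
`PU ≤ γU + K` and the minorization condition on the sublevel set `{U ≤ R}` with
`R > 2K/(1−γ)`, the stochastic matrix `P` admits a unique invariant probability
distribution `π` with `‖π‖_U < ∞`, and iterates of `P` contract the `U`-weighted
total variation distance between probability distributions geometrically. -/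
theorem harris_geometric_ergodicity {S : Type*} [Countable S]
    (P : S → S → ℝ) (hP0 : ∀ x y, 0 ≤ P x y) (hP1 : ∀ x, HasSum (P x) 1)
    (U : S → ℝ) (hU : ∀ x, 1 ≤ U x)
    (γ K : ℝ) (hγ : γ ∈ Set.Ioo (0 : ℝ) 1)
    (hPUsum : ∀ x, Summable fun y => P x y * U y)
    (hdrift : ∀ x, (∑' y, P x y * U y) ≤ γ * U x + K)
    (R : ℝ) (hR : R > 2 * K / (1 - γ))
    (α : ℝ) (hα : 0 < α)
    (ν : S → ℝ) (hν0 : ∀ y, 0 ≤ ν y) (hν1 : HasSum ν 1)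
    (hminor : ∀ x, U x ≤ R → ∀ y, α * ν y ≤ P x y) :
    (∃! π : S → ℝ,
        (∀ x, 0 ≤ π x) ∧ HasSum π 1 ∧ normU U π < ⊤ ∧ stepL P π = π) ∧
    ∃ c₁ > (0 : ℝ), ∃ ρ ∈ Set.Ioo (0 : ℝ) 1,
      ∀ μ₁ μ₂ : S → ℝ,
        (∀ x, 0 ≤ μ₁ x) → HasSum μ₁ 1 → normU U μ₁ < ⊤ →
        (∀ x, 0 ≤ μ₂ x) → HasSum μ₂ 1 → normU U μ₂ < ⊤ →
        ∀ n : ℕ,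
          normU U ((stepL P)^[n] μ₁ - (stepL P)^[n] μ₂)
            ≤ ENNReal.ofReal (c₁ * ρ ^ n) * normU U (μ₁ - μ₂) :=
  harris_geometric_ergodicity_general P hP0 hP1 U hU γ K hγ hPUsum hdrift R hR α hα ν hν0 hν1 hminor
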